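/- arXiv:2605.04893 — 2 statements merged into one kernel-verified Lean document; each statement's English description precedes it below -/
import Mathlib

section
/- Let A ∈ ℝ^{n_q×n_k} be row-stochastic with positive column degrees d_j, and let Δ be the diagonal matrix with entries δ_j = d_j^{-1/2} − d̄^{-1/2}, where d̄ = (Σ_j d_j)/n_k. Then the operator norm of AΔ satisfies σ₁(AΔ) ≤ max_j |1 − √(d_j/d̄)|. -/
/-!
Each row of `A` is a probability vector, so by Jensen (Cauchy–Schwarz with weights `A i j`)
`((AΔx)_i)² ≤ Σ_j A i j (δ_j x_j)²`; summing over `i` turns the column sums into the degrees,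
giving `‖AΔx‖² ≤ Σ_j d_j δ_j² x_j²`. Finally `√d_j δ_j = 1 − √(d_j / d̄)`, so each weight
`d_j δ_j²` is at most the square of the maximum.
-/

open Matrix

theorem sq_sum_mul_le_sum_mul_sq {ι : Type*} (s : Finset ι) {w : ι → ℝ}
    (hw : ∀ i ∈ s, 0 ≤ w i) (hw₁ : ∑ i ∈ s, w i = 1) (y : ι → ℝ) :
    (∑ i ∈ s, w i * y i) ^ 2 ≤ ∑ i ∈ s, w i * y i ^ 2 :=
  (even_two.convexOn_pow (𝕜 := ℝ)).map_sum_le hw hw₁ fun _ _ => Set.mem_univ _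

theorem Matrix.sum_sq_mulVec_le_sum_colSum_mul_sq {m n : Type*} [Fintype m] [Fintype n]
    (A : Matrix m n ℝ) (hA : ∀ i j, 0 ≤ A i j) (hrow : ∀ i, ∑ j, A i j = 1) (y : n → ℝ) :
    ∑ i, (A *ᵥ y) i ^ 2 ≤ ∑ j, (∑ i, A i j) * y j ^ 2 :=
  calc ∑ i, (A *ᵥ y) i ^ 2 ≤ ∑ i, ∑ j, A i j * y j ^ 2 :=
        Finset.sum_le_sum fun i _ =>
          sq_sum_mul_le_sum_mul_sq _ (fun j _ => hA i j) (hrow i) y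
    _ = ∑ j, (∑ i, A i j) * y j ^ 2 := by
        rw [Finset.sum_comm]
        simp only [Finset.sum_mul]

theorem Real.sqrt_mul_inv_sqrt_sub_inv_sqrt {d : ℝ} (hd : 0 < d) (b : ℝ) :
    √d * ((√d)⁻¹ - (√b)⁻¹) = 1 - √(d / b) := by
  have : √d ≠ 0 := (Real.sqrt_pos.mpr hd).ne'
  rw [Real.sqrt_div hd.le, mul_sub, mul_inv_cancel₀ this, div_eq_mul_inv]

theorem Real.mul_sq_inv_sqrt_sub_inv_sqrt_le {d : ℝ} (hd : 0 ≤ d) (b : ℝ) :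
    d * ((√d)⁻¹ - (√b)⁻¹) ^ 2 ≤ (1 - √(d / b)) ^ 2 := by
  rcases hd.eq_or_lt with rfl | hd
  · simp only [zero_mul]
    positivity
  · rw [← sqrt_mul_inv_sqrt_sub_inv_sqrt hd, mul_pow, Real.sq_sqrt hd.le]

theorem opNorm_A_Delta_le_general {nq nk : ℕ} (hnk : 0 < nk)
    (A : Matrix (Fin nq) (Fin nk) ℝ)
    (hnonneg : ∀ i j, 0 ≤ A i j)
    (hrow : ∀ i, ∑ j, A i j = 1)
    (d : Fin nk → ℝ) (hd : ∀ j, d j = ∑ i, A i j)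
    (dbar : ℝ) :
    ∀ x : Fin nk → ℝ,
      ∑ i, ((A * Matrix.diagonal
              (fun j => (Real.sqrt (d j))⁻¹ - (Real.sqrt dbar)⁻¹)).mulVec x i)^2
        ≤ (Finset.univ.sup' (Finset.univ_nonempty_iff.mpr ⟨⟨0, hnk⟩⟩)
            (fun j => |1 - Real.sqrt (d j / dbar)|))^2 * ∑ j, (x j)^2 := by
  intro x
  set δ : Fin nk → ℝ := fun j => (√(d j))⁻¹ - (√dbar)⁻¹
  set M := Finset.univ.sup' (Finset.univ_nonempty_iff.mpr ⟨⟨0, hnk⟩⟩)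
    (fun j => |1 - √(d j / dbar)|)
  have hweight (j : Fin nk) : d j * δ j ^ 2 ≤ M ^ 2 := by
    have hdj : 0 ≤ d j := hd j ▸ Finset.sum_nonneg fun i _ => hnonneg i j
    calc d j * δ j ^ 2 ≤ |1 - √(d j / dbar)| ^ 2 := by
          simpa only [sq_abs] using Real.mul_sq_inv_sqrt_sub_inv_sqrt_le hdj dbar
      _ ≤ M ^ 2 := pow_le_pow_left₀ (abs_nonneg _) (Finset.le_sup'
          (fun j => |1 - √(d j / dbar)|) (Finset.mem_univ j)) 2
  rw [← mulVec_mulVec, Finset.mul_sum]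
  calc ∑ i, (A *ᵥ (diagonal δ *ᵥ x)) i ^ 2 ≤ ∑ j, d j * (δ j * x j) ^ 2 := by
        simpa only [mulVec_diagonal, ← hd] using
          A.sum_sq_mulVec_le_sum_colSum_mul_sq hnonneg hrow (diagonal δ *ᵥ x)
    _ ≤ ∑ j, M ^ 2 * x j ^ 2 := Finset.sum_le_sum fun j _ => by
        rw [mul_pow, ← mul_assoc]
        exact mul_le_mul_of_nonneg_right (hweight j) (sq_nonneg _)

/-- Operator-norm bound `σ₁(AΔ) ≤ max_j |1 − √(d_j/d̄)|` for row-stochastic `A`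
with positive column degrees `d_j`, mean degree `d̄`, and
`Δ = diag(d_j^{-1/2} − d̄^{-1/2})`: for every vector `x`,
`‖(AΔ) x‖² ≤ (max_j |1 − √(d_j/d̄)|)² ‖x‖²`. -/
theorem opNorm_A_Delta_le {nq nk : ℕ} (hnk : 0 < nk)
    (A : Matrix (Fin nq) (Fin nk) ℝ)
    (hnonneg : ∀ i j, 0 ≤ A i j)
    (hrow : ∀ i, ∑ j, A i j = 1)
    (d : Fin nk → ℝ) (hd : ∀ j, d j = ∑ i, A i j) (hdpos : ∀ j, 0 < d j)
    (dbar : ℝ) (hdbar : dbar = (∑ j, d j) / nk) :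
    ∀ x : Fin nk → ℝ,
      ∑ i, ((A * Matrix.diagonal
              (fun j => (Real.sqrt (d j))⁻¹ - (Real.sqrt dbar)⁻¹)).mulVec x i)^2
        ≤ (Finset.univ.sup' (Finset.univ_nonempty_iff.mpr ⟨⟨0, hnk⟩⟩)
            (fun j => |1 - Real.sqrt (d j / dbar)|))^2 * ∑ j, (x j)^2 :=
  opNorm_A_Delta_le_general hnk A hnonneg hrow d hd dbar
end

section
/- For uniform causal attention B ∈ ℝ^{n×n} with B_{ij} = 1/(i+1) for j ≤ i (0-indexed) and 0 otherwise, and the temporal cut S_t consisting of queries Q_0,…,Q_{t−1} and keys K_0,…,K_{t−1} in the bipartite dilation graph, the cut weight equals cut(S_t) = t·(H_n − H_t) and the volume equals vol(S_t) = t·(2 + H_n − H_t), where H_m = Σ_{k=1}^m 1/k. -/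
open Matrix BigOperators

/-- Harmonic number `H_m = ∑_{k=1}^m 1/k`. -/
noncomputable def harmSum (m : ℕ) : ℝ := ∑ k ∈ Finset.range m, (1 : ℝ) / (k + 1)

/-- Uniform causal attention `B_{ij} = 1/(i+1)` for `j ≤ i` (0-indexed). -/
noncomputable def uniformCausal (n : ℕ) : Matrix (Fin n) (Fin n) ℝ :=
  fun i j => if (j : ℕ) ≤ (i : ℕ) then 1 / ((i : ℕ) + 1) else 0

/-- Cut weight of the temporal cut `S_t` on the bipartite dilation graph:
the total weight of edges `Q_i — K_j` with exactly one endpoint in `S_t`. -/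
noncomputable def cutWeight (n t : ℕ) : ℝ :=
  ∑ i : Fin n, ∑ j : Fin n,
    if ((i : ℕ) < t ∧ ¬ (j : ℕ) < t) ∨ ((j : ℕ) < t ∧ ¬ (i : ℕ) < t) then
      uniformCausal n i j else 0

/-- Volume of `S_t`: query vertices weighted by row sums, key vertices by
column sums. -/
noncomputable def volWeight (n t : ℕ) : ℝ :=
  (∑ i : Fin n, if (i : ℕ) < t then ∑ j : Fin n, uniformCausal n i j else 0) +
  (∑ j : Fin n, if (j : ℕ) < t then ∑ i : Fin n, uniformCausal n i j else 0)

/-! Causal attention is lower triangular, so no edge joins a query `Q_i` with `i < t`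
to a key `K_j` with `j ≥ t`. The cut therefore consists of the edges `Q_i — K_j` with
`j < t ≤ i`, of weight `∑_{i=t}^{n-1} t/(i+1) = t (H_n - H_t)`. The keys `K_j, j < t`, carry
every edge at the queries `Q_i, i < t` (total weight `t`, as rows sum to `1`) plus the cut
edges, so `vol(S_t) = t + (t + cut(S_t))`. -/

open Finset

section LowerTriangular

variable {R : Type*} [AddCommMonoid R] {n : ℕ} (B : Matrix (Fin n) (Fin n) R) (t : ℕ)

def lowerLeftSum : R :=
  ∑ i : Fin n, ∑ j : Fin n, if t ≤ (i : ℕ) ∧ (j : ℕ) < t then B i j else 0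

variable {B}

theorem cutSum_eq_lowerLeftSum (hB : ∀ i j : Fin n, i < j → B i j = 0) :
    ∑ i : Fin n, ∑ j : Fin n, (if ((i : ℕ) < t ∧ ¬ (j : ℕ) < t) ∨
        ((j : ℕ) < t ∧ ¬ (i : ℕ) < t) then B i j else 0) = lowerLeftSum B t := by
  refine sum_congr rfl fun i _ => sum_congr rfl fun j _ => ?_
  by_cases hi : (i : ℕ) < t <;> by_cases hj : (j : ℕ) < t
  · simp [hi, hj]
  · simp [hi, hj, hB i j (Fin.lt_def.2 (by omega))]
  · simp [hi, hj, le_of_not_gt hi]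
  · simp [hi, hj]

theorem sum_colSum_lt_eq_add_lowerLeftSum (hB : ∀ i j : Fin n, i < j → B i j = 0) :
    ∑ j : Fin n, (if (j : ℕ) < t then ∑ i : Fin n, B i j else 0) =
      ∑ i : Fin n, (if (i : ℕ) < t then ∑ j : Fin n, B i j else 0) + lowerLeftSum B t := by
  have entrywise : ∀ i j : Fin n, (if (j : ℕ) < t then B i j else 0) =
      (if (i : ℕ) < t then B i j else 0) +
        if t ≤ (i : ℕ) ∧ (j : ℕ) < t then B i j else 0 := by
    intro i j
    by_cases hi : (i : ℕ) < t <;> by_cases hj : (j : ℕ) < t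
    · simp [hi, hj, not_le.2 hi]
    · simp [hi, hj, hB i j (Fin.lt_def.2 (by omega))]
    · simp [hi, hj, le_of_not_gt hi]
    · simp [hi, hj]
  have ite_sum : ∀ (p : Prop) [Decidable p] (f : Fin n → R),
      (if p then ∑ k, f k else 0) = ∑ k, if p then f k else 0 := by
    intro p _ f
    split_ifs <;> simp
  simp only [ite_sum]
  rw [sum_comm, lowerLeftSum, ← sum_add_distrib]
  refine sum_congr rfl fun i _ => ?_
  rw [← sum_add_distrib]
  exact sum_congr rfl fun j _ => entrywise i j

end LowerTriangular

theorem Fin.sum_ite_le_eq_sum_Ico {M : Type*} [AddCommMonoid M] (n t : ℕ) (f : ℕ → M) :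
    ∑ i : Fin n, (if t ≤ (i : ℕ) then f i else 0) = ∑ k ∈ Ico t n, f k := by
  rw [Fin.sum_univ_eq_sum_range (fun k => if t ≤ k then f k else 0), ← sum_filter]
  congr 1
  ext k
  simp only [mem_filter, mem_range, mem_Ico]
  omega

theorem uniformCausal_eq_zero_of_lt {n : ℕ} {i j : Fin n} (hij : i < j) :
    uniformCausal n i j = 0 :=
  if_neg (not_le.2 hij)

theorem sum_uniformCausal_row {n : ℕ} (i : Fin n) : ∑ j : Fin n, uniformCausal n i j = 1 := by
  simp only [uniformCausal, ← Nat.lt_succ_iff]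
  rw [sum_ite, sum_const_zero, add_zero, sum_const, nsmul_eq_mul, Fin.card_filter_val_lt,
    min_eq_right i.isLt]
  push_cast
  field_simp

theorem lowerLeftSum_uniformCausal {n t : ℕ} (ht : t ≤ n) :
    lowerLeftSum (uniformCausal n) t = t * (harmSum n - harmSum t) := by
  have row : ∀ i : Fin n, ∑ j : Fin n,
      (if t ≤ (i : ℕ) ∧ (j : ℕ) < t then uniformCausal n i j else 0) =
      if t ≤ (i : ℕ) then (t : ℝ) * (1 / ((i : ℕ) + 1)) else 0 := by
    intro i
    by_cases hi : t ≤ (i : ℕ)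
    · have entry : ∀ j : Fin n, (if (j : ℕ) < t then uniformCausal n i j else 0) =
          if (j : ℕ) < t then 1 / ((i : ℕ) + 1 : ℝ) else 0 := fun j => by
        split_ifs with hj
        · exact if_pos (by omega)
        · rfl
      simp only [hi, true_and, if_true, entry, ← sum_filter, sum_const, Fin.card_filter_val_lt,
        min_eq_right ht, nsmul_eq_mul]
    · simp [hi]
  rw [lowerLeftSum, sum_congr rfl fun i _ => row i,
    Fin.sum_ite_le_eq_sum_Ico n t (fun k => t * (1 / (k + 1) : ℝ)), ← mul_sum,
    harmSum, harmSum, ← sum_Ico_eq_sub _ ht]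

/-- Cut and volume identities for uniform causal attention:
`cut(S_t) = t (H_n − H_t)` and `vol(S_t) = t (2 + H_n − H_t)`. -/
theorem uniformCausal_cut_vol (n t : ℕ) (ht : t ≤ n) :
    cutWeight n t = t * (harmSum n - harmSum t) ∧
    volWeight n t = t * (2 + harmSum n - harmSum t) := by
  have hB : ∀ i j : Fin n, i < j → uniformCausal n i j = 0 :=
    fun _ _ => uniformCausal_eq_zero_of_lt
  have queryVol :
      ∑ i : Fin n, (if (i : ℕ) < t then ∑ j : Fin n, uniformCausal n i j else 0) = t := by
    simp only [sum_uniformCausal_row, sum_boole, Fin.card_filter_val_lt, min_eq_right ht]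
  have cut := lowerLeftSum_uniformCausal ht
  constructor
  · rw [cutWeight, cutSum_eq_lowerLeftSum t hB, cut]
  · rw [volWeight, sum_colSum_lt_eq_add_lowerLeftSum t hB, queryVol, cut]
    ring
end
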